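/- arXiv:1505.06905 — 2 statements merged into one kernel-verified Lean document; each statement's English description precedes it below -/
import Mathlib

section
/- For all real χ ≥ 1 and complex ω = a + ib with -1 ≤ a ≤ 0, the upper incomplete gamma function satisfies |Γ(ω+1, χ)| ≤ 2·e^{-χ}·χ^{a+1}. -/
open MeasureTheory Set

/-! For `Re ω ≤ 0` the factor `|t ^ ω| = t ^ Re ω` is decreasing, so on `(χ, ∞)` it is at most
`χ ^ Re ω`, and the remaining integral of `e^{-t}` is `e^{-χ}`. Since `χ ≥ 1`, `χ ^ Re ω` is
at most `χ ^ (Re ω + 1)`, leaving the factor `2` to spare. -/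

lemma norm_cexp_neg_mul_cpow_le {χ t : ℝ} (hχ : 0 < χ) (ht : χ ≤ t) {ω : ℂ} (hω : ω.re ≤ 0) :
    ‖Complex.exp (-(t : ℂ)) * (t : ℂ) ^ ω‖ ≤ χ ^ ω.re * Real.exp (-t) := by
  rw [norm_mul, Complex.norm_exp, Complex.norm_cpow_eq_rpow_re_of_pos (hχ.trans_le ht),
    Complex.neg_re, Complex.ofReal_re, mul_comm]
  exact mul_le_mul_of_nonneg_right (Real.rpow_le_rpow_of_nonpos hχ ht hω) (Real.exp_pos _).le

lemma norm_integral_Ioi_cexp_neg_mul_cpow_le {χ : ℝ} (hχ : 0 < χ) {ω : ℂ} (hω : ω.re ≤ 0) :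
    ‖∫ t in Ioi χ, Complex.exp (-(t : ℂ)) * (t : ℂ) ^ ω‖ ≤ χ ^ ω.re * Real.exp (-χ) := by
  have hint : IntegrableOn (fun t : ℝ => χ ^ ω.re * Real.exp (-t)) (Ioi χ) := by
    simpa [IntegrableOn] using (exp_neg_integrableOn_Ioi χ one_pos).const_mul (χ ^ ω.re)
  calc ‖∫ t in Ioi χ, Complex.exp (-(t : ℂ)) * (t : ℂ) ^ ω‖
      ≤ ∫ t in Ioi χ, χ ^ ω.re * Real.exp (-t) := by
        refine norm_integral_le_of_norm_le hint ?_
        filter_upwards [ae_restrict_mem measurableSet_Ioi] with t ht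
        exact norm_cexp_neg_mul_cpow_le hχ (le_of_lt ht) hω
    _ = χ ^ ω.re * Real.exp (-χ) := by rw [integral_const_mul, integral_exp_neg_Ioi]

theorem upper_incomplete_gamma_bound_neg_general (χ : ℝ) (hχ : 1 ≤ χ) (ω : ℂ)
    (h₂ : ω.re ≤ 0) :
    ‖∫ t in Set.Ioi χ, Complex.exp (-(t : ℂ)) * (t : ℂ) ^ ω‖ ≤
      2 * Real.exp (-χ) * χ ^ (ω.re + 1) := by
  have hχ0 : 0 < χ := one_pos.trans_le hχ
  have hpow : χ ^ ω.re ≤ χ ^ (ω.re + 1) := Real.rpow_le_rpow_of_exponent_le hχ (by linarith)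
  calc ‖∫ t in Set.Ioi χ, Complex.exp (-(t : ℂ)) * (t : ℂ) ^ ω‖
      ≤ χ ^ ω.re * Real.exp (-χ) := norm_integral_Ioi_cexp_neg_mul_cpow_le hχ0 h₂
    _ ≤ 2 * Real.exp (-χ) * χ ^ (ω.re + 1) := by
        nlinarith [Real.exp_pos (-χ), Real.rpow_pos_of_pos hχ0 ω.re]

/-- Upper incomplete gamma bound for `-1 ≤ Re ω ≤ 0`, `χ ≥ 1`:
`|Γ(ω+1, χ)| ≤ 2 e^{-χ} χ^{Re ω + 1}`, where
`Γ(s, χ) = ∫_χ^∞ e^{-t} t^{s-1} dt` (so `Γ(ω+1,χ) = ∫_χ^∞ e^{-t} t^ω dt`). -/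
theorem upper_incomplete_gamma_bound_neg (χ : ℝ) (hχ : 1 ≤ χ) (ω : ℂ)
    (h₁ : -1 ≤ ω.re) (h₂ : ω.re ≤ 0) :
    ‖∫ t in Set.Ioi χ, Complex.exp (-(t : ℂ)) * (t : ℂ) ^ ω‖ ≤
      2 * Real.exp (-χ) * χ ^ (ω.re + 1) :=
  upper_incomplete_gamma_bound_neg_general χ hχ ω h₂
end

section
/- For all real χ ≥ 1 and complex ω = a + ib with 1 ≤ a ≤ χ, the upper incomplete gamma function satisfies |Γ(ω+1, χ)| ≤ 2·e^{-χ}·χ^{a+1}. -/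
/-!
Write `a = Re ω`. On `[χ, ∞)` we have `|e^{-t} t^ω| = t^{a-1} e^{-t} · t`, and since
`log (t/χ) ≤ t/χ - 1` and `0 ≤ a - 1 ≤ χ - 1`,
`t^{a-1} e^{-t} ≤ χ^{a-1} e^{-χ} e^{-(t-χ)/χ}`: the factor `t^{a-1}` grows at most like
`e^{(χ-1)(t-χ)/χ}`, which leaves the decay `e^{-(t-χ)/χ}`. Integrating against `t` gives
`∫_χ^∞ t e^{-(t-χ)/χ} dt = 2χ²`, hence the bound `2 e^{-χ} χ^{a+1}`.
-/

open MeasureTheory Set Filter Topology Real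

theorem rpow_mul_exp_neg_le_of_le {c t p : ℝ} (hc : 0 < c) (hct : c ≤ t) (hp : 0 ≤ p)
    (hpc : p ≤ c - 1) :
    t ^ p * exp (-t) ≤ c ^ p * exp (-c) * exp (-(c⁻¹ * (t - c))) := by
  have ht : 0 < t := hc.trans_le hct
  set d := c⁻¹ * (t - c)
  have hd : 0 ≤ d := mul_nonneg (inv_nonneg.2 hc.le) (sub_nonneg.2 hct)
  have hlog : log t - log c ≤ d := by
    have h := log_le_sub_one_of_pos (div_pos ht hc)
    rwa [log_div ht.ne' hc.ne', div_sub_one hc.ne', div_eq_inv_mul] at h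
  have hcd : (c - 1) * d = t - c - d := by
    simp only [d]
    field_simp
  rw [rpow_def_of_pos ht, rpow_def_of_pos hc, ← exp_add, ← exp_add, ← exp_add, exp_le_exp]
  nlinarith [mul_le_mul_of_nonneg_left hlog hp, mul_le_mul_of_nonneg_right hpc hd]

section MulExpNegMulSub

variable {b : ℝ} (c : ℝ)

theorem hasDerivAt_primitive_mul_exp_neg_mul_sub (hb : b ≠ 0) (t : ℝ) :
    HasDerivAt (fun t => -((t / b + 1 / b ^ 2) * exp (-(b * (t - c)))))
      (t * exp (-(b * (t - c)))) t := by
  have hexp : HasDerivAt (fun t => exp (-(b * (t - c)))) (exp (-(b * (t - c))) * -b) t :=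
    (((hasDerivAt_id' t).sub_const c).const_mul b).neg.exp.congr_deriv (by simp)
  refine ((((hasDerivAt_id' t).div_const b).add_const (1 / b ^ 2)).mul hexp).neg.congr_deriv ?_
  field_simp
  ring

theorem tendsto_primitive_mul_exp_neg_mul_sub_atTop (hb : 0 < b) :
    Tendsto (fun t => -((t / b + 1 / b ^ 2) * exp (-(b * (t - c))))) atTop (𝓝 0) := by
  have h1 := tendsto_rpow_mul_exp_neg_mul_atTop_nhds_zero 1 b hb
  have h0 := tendsto_rpow_mul_exp_neg_mul_atTop_nhds_zero 0 b hb
  convert (((h1.const_mul b⁻¹).add (h0.const_mul (1 / b ^ 2))).const_mul (exp (b * c))).neg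
    using 2 with t
  · rw [rpow_one, rpow_zero, show -(b * (t - c)) = b * c + -b * t by ring, exp_add]
    ring
  · simp

variable {c}

theorem integrableOn_Ioi_mul_exp_neg_mul_sub (hb : 0 < b) (hc : 0 ≤ c) :
    IntegrableOn (fun t => t * exp (-(b * (t - c)))) (Ioi c) :=
  integrableOn_Ioi_deriv_of_nonneg'
    (fun t _ => hasDerivAt_primitive_mul_exp_neg_mul_sub c hb.ne' t)
    (fun _ ht => mul_nonneg (hc.trans ht.le) (exp_pos _).le)
    (tendsto_primitive_mul_exp_neg_mul_sub_atTop c hb)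

theorem integral_Ioi_mul_exp_neg_mul_sub (hb : 0 < b) (hc : 0 ≤ c) :
    ∫ t in Ioi c, t * exp (-(b * (t - c))) = c / b + 1 / b ^ 2 := by
  rw [integral_Ioi_of_hasDerivAt_of_nonneg'
    (fun t _ => hasDerivAt_primitive_mul_exp_neg_mul_sub c hb.ne' t)
    (fun _ ht => mul_nonneg (hc.trans ht.le) (exp_pos _).le)
    (tendsto_primitive_mul_exp_neg_mul_sub_atTop c hb)]
  simp

end MulExpNegMulSub

/-- Upper incomplete gamma bound for `1 ≤ Re ω ≤ χ`, `χ ≥ 1`: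
`|Γ(ω+1, χ)| ≤ 2 e^{-χ} χ^{Re ω + 1}`, where
`Γ(s, χ) = ∫_χ^∞ e^{-t} t^{s-1} dt` (so `Γ(ω+1,χ) = ∫_χ^∞ e^{-t} t^ω dt`). -/
theorem upper_incomplete_gamma_bound_large (χ : ℝ) (hχ : 1 ≤ χ) (ω : ℂ)
    (h₁ : 1 ≤ ω.re) (h₂ : ω.re ≤ χ) :
    ‖∫ t in Set.Ioi χ, Complex.exp (-(t : ℂ)) * (t : ℂ) ^ ω‖ ≤
      2 * Real.exp (-χ) * χ ^ (ω.re + 1) := by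
  have hχ0 : 0 < χ := by linarith
  have hbound : ∀ t ∈ Ioi χ, ‖Complex.exp (-(t : ℂ)) * (t : ℂ) ^ ω‖ ≤
      χ ^ (ω.re - 1) * exp (-χ) * (t * exp (-(χ⁻¹ * (t - χ)))) := by
    intro t ht
    have ht0 : 0 < t := hχ0.trans ht
    rw [norm_mul, Complex.norm_exp, Complex.norm_cpow_eq_rpow_re_of_pos ht0]
    calc exp (-t) * t ^ ω.re = t ^ (ω.re - 1) * exp (-t) * t := by
          rw [rpow_sub_one ht0.ne']; field_simp
      _ ≤ χ ^ (ω.re - 1) * exp (-χ) * exp (-(χ⁻¹ * (t - χ))) * t :=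
          mul_le_mul_of_nonneg_right
            (rpow_mul_exp_neg_le_of_le hχ0 ht.le (by linarith) (by linarith)) ht0.le
      _ = _ := by ring
  calc _ ≤ ∫ t in Ioi χ, χ ^ (ω.re - 1) * exp (-χ) * (t * exp (-(χ⁻¹ * (t - χ)))) :=
        norm_integral_le_of_norm_le
          ((integrableOn_Ioi_mul_exp_neg_mul_sub (inv_pos.2 hχ0) hχ0.le).const_mul _)
          (ae_restrict_of_forall_mem measurableSet_Ioi hbound)
    _ = 2 * exp (-χ) * χ ^ (ω.re + 1) := by
        rw [integral_const_mul, integral_Ioi_mul_exp_neg_mul_sub (inv_pos.2 hχ0) hχ0.le,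
          rpow_add hχ0, rpow_sub_one hχ0.ne', rpow_one]
        field_simp
        ring
end
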